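/- Let (p,q) be a strict pair in X. Then bisec(p,q) is homeomorphic to the real line ℝ. -/

import Mathlib

/-!
For `d = p - q`, a point `y + t • d` lies on the bisector iff the convex function
`f(t) = ‖y - q + t • d‖` satisfies `f (t - 1) = f t`. Such a `t` exists by the intermediate value
theorem. Two of them on one line would make `f` constant on a nondegenerate interval, i.e. put a
segment parallel to `d` on a sphere, which strictness forbids. So the projection of the bisector to
`X ⧸ ℝ ∙ d` is a continuous bijection; it is proper because `f t ≤ max (f (-1)) (f 0)` at such a
`t`, hence a homeomorphism, and in dimension two the quotient is a line.
-/

variable {X : Type*} [NormedAddCommGroup X] [NormedSpace ℝ X]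

/-- The bisector of two points: all points equidistant from `p` and `q`. -/
def bisec (p q : X) : Set X := {z : X | ‖z - p‖ = ‖z - q‖}

/-- The pair `(p, q)` is strict if the unit sphere contains no nondegenerate
segment parallel to `p - q`. -/
def strictPair (p q : X) : Prop :=
  ¬ ∃ a b : X, a ≠ b ∧ segment ℝ a b ⊆ {x : X | ‖x‖ = 1} ∧ ∃ t : ℝ, b - a = t • (p - q)

/-- The cone `C(x, φ) = {x + a : φ(a) = ‖a‖}`. -/
def cone (x : X) (φ : X →L[ℝ] ℝ) : Set X := {z : X | φ (z - x) = ‖z - x‖}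

open Set Module

theorem ConvexOn.le_of_notMem_Ioo_of_eq {F : ℝ → ℝ} (hF : ConvexOn ℝ univ F) {a b t : ℝ}
    (hab : a < b) (heq : F a = F b) (ht : t ∉ Ioo a b) : F b ≤ F t := by
  rcases le_or_gt b t with hbt | hta
  · exact hF.le_right_of_left_le'' (mem_univ a) (mem_univ t) hab hbt heq.le
  · have hta : t ≤ a := not_lt.mp fun h => ht ⟨h, hta⟩
    exact heq ▸ hF.le_left_of_right_le'' (mem_univ t) (mem_univ b) hta hab heq.ge

theorem convexOn_norm_add_smul (w d : X) : ConvexOn ℝ univ fun t : ℝ => ‖w + t • d‖ := by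
  have h := (convexOn_norm (E := X) convex_univ).comp_affineMap
    (AffineMap.lineMap (k := ℝ) w (w + d))
  rw [preimage_univ] at h
  refine h.congr fun t _ => ?_
  simp [AffineMap.lineMap_apply, add_comm]

variable {p q : X}

theorem add_smul_mem_bisec_iff (y : X) (s : ℝ) :
    y + s • (p - q) ∈ bisec p q ↔ ‖y - q + (s - 1) • (p - q)‖ = ‖y - q + s • (p - q)‖ := by
  rw [bisec, mem_ofPred_eq, show y + s • (p - q) - p = y - q + (s - 1) • (p - q) by module,
    add_sub_right_comm]

theorem strictPair.not_forall_norm_add_smul_eq (hs : strictPair p q) (hpq : p ≠ q) {u : X}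
    (hu : u ≠ 0) {c : ℝ} (hc : 0 < c) : ¬ ∀ t ∈ Icc 0 c, ‖u + t • (p - q)‖ = ‖u‖ := by
  intro hconst
  have hr : ‖u‖⁻¹ ≠ 0 := inv_ne_zero (norm_ne_zero_iff.mpr hu)
  refine hs ⟨‖u‖⁻¹ • u, ‖u‖⁻¹ • (u + c • (p - q)), ?_, ?_, ‖u‖⁻¹ * c, by module⟩
  · simpa [hr, hc.ne', sub_eq_zero] using hpq
  · rw [segment_eq_image']
    rintro _ ⟨θ, ⟨hθ₀, hθ₁⟩, rfl⟩
    have hθc : θ * c ∈ Icc 0 c := ⟨by positivity, by nlinarith⟩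
    change ‖‖u‖⁻¹ • u + θ • (‖u‖⁻¹ • (u + c • (p - q)) - ‖u‖⁻¹ • u)‖ = 1
    rw [show ‖u‖⁻¹ • u + θ • (‖u‖⁻¹ • (u + c • (p - q)) - ‖u‖⁻¹ • u)
      = ‖u‖⁻¹ • (u + (θ * c) • (p - q)) by module, norm_smul, hconst _ hθc, norm_inv,
      norm_norm, inv_mul_cancel₀ (norm_ne_zero_iff.mpr hu)]

theorem strictPair.add_smul_notMem_bisec (hs : strictPair p q) (hpq : p ≠ q) {z : X}
    (hz : z ∈ bisec p q) {c : ℝ} (hc : 0 < c) : z + c • (p - q) ∉ bisec p q := by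
  intro hzc
  set F : ℝ → ℝ := fun t => ‖z - q + t • (p - q)‖
  have hF : ConvexOn ℝ univ F := convexOn_norm_add_smul (z - q) (p - q)
  have h₀ : F (-1) = F 0 := by
    have h := (add_smul_mem_bisec_iff z 0).mp (by rwa [zero_smul, add_zero])
    rwa [zero_sub] at h
  have h₁ : F (c - 1) = F c := (add_smul_mem_bisec_iff z c).mp hzc
  have hF0_le : ∀ t, 0 ≤ t → F 0 ≤ F t := fun t ht =>
    hF.le_of_notMem_Ioo_of_eq (by norm_num) h₀ fun h => h.2.not_ge ht
  have hFc : F c = F 0 := le_antisymm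
    (h₀ ▸ hF.le_of_notMem_Ioo_of_eq (by linarith) h₁ fun h => h.1.not_ge (by linarith))
    (hF0_le c hc.le)
  have hzq : z - q ≠ 0 := by
    rintro hzq
    exact hpq (by simpa [bisec, sub_eq_zero.mp hzq, sub_eq_zero, eq_comm] using hz)
  refine hs.not_forall_norm_add_smul_eq hpq hzq hc fun t ht => ?_
  have hFt : F t = F 0 := le_antisymm
    ((hF.le_on_segment (mem_univ 0) (mem_univ c) (by rwa [segment_eq_Icc hc.le])).trans
      (by rw [hFc, max_self]))
    (hF0_le t ht.1)
  simpa [F] using hFt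

theorem strictPair.eq_zero_of_add_smul_mem_bisec (hs : strictPair p q) (hpq : p ≠ q) {z : X}
    (hz : z ∈ bisec p q) {c : ℝ} (hzc : z + c • (p - q) ∈ bisec p q) : c = 0 := by
  rcases lt_trichotomy c 0 with hc | hc | hc
  · refine absurd ?_ (hs.add_smul_notMem_bisec hpq hzc (neg_pos.mpr hc))
    rwa [add_assoc, ← add_smul, add_neg_cancel, zero_smul, add_zero]
  · exact hc
  · exact absurd hzc (hs.add_smul_notMem_bisec hpq hz hc)

theorem norm_le_norm_add_smul {w d : X} {s : ℝ} (h : 2 * ‖w‖ ≤ |s| * ‖d‖) :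
    ‖w‖ ≤ ‖w + s • d‖ := by
  have := norm_sub_le (w + s • d) w
  rw [add_sub_cancel_left, norm_smul, Real.norm_eq_abs] at this
  linarith

theorem exists_add_smul_mem_bisec (hpq : p ≠ q) (y : X) :
    ∃ s : ℝ, y + s • (p - q) ∈ bisec p q := by
  set F : ℝ → ℝ := fun t => ‖y - q + t • (p - q)‖
  have hF : ConvexOn ℝ univ F := convexOn_norm_add_smul (y - q) (p - q)
  have hd : 0 < ‖p - q‖ := norm_pos_iff.mpr (sub_ne_zero.mpr hpq)
  -- `F t ≥ F 0` once `|t| ≥ R + 1`, so convexity fixes the sign of `F (s - 1) - F s`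
  -- at `s = -R` and `s = R + 1`.
  set R := 2 * ‖y - q‖ / ‖p - q‖
  have hR : 0 ≤ R := by positivity
  have hFR : ∀ t, R + 1 ≤ |t| → F 0 ≤ F t := fun t ht => by
    simpa [F] using norm_le_norm_add_smul (by
      rw [← div_le_iff₀ hd]
      linarith)
  have hright : F R ≤ F (R + 1) := by
    refine (hF.le_on_segment (mem_univ 0) (mem_univ (R + 1)) ?_).trans
      (max_le (hFR _ (le_abs_self _)) le_rfl)
    rw [segment_eq_Icc (by linarith)]
    exact ⟨hR, by linarith⟩
  have hleft : F (-R) ≤ F (-R - 1) := by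
    refine (hF.le_on_segment (mem_univ (-R - 1)) (mem_univ 0) ?_).trans
      (max_le le_rfl (hFR _ (by rw [abs_of_neg (by linarith)]; linarith)))
    rw [segment_eq_Icc (by linarith)]
    exact ⟨by linarith, by linarith⟩
  have hcont : Continuous fun s => F (s - 1) - F s := by fun_prop
  have h0 : (0 : ℝ) ∈ Icc (F (R + 1 - 1) - F (R + 1)) (F (-R - 1) - F (-R)) :=
    ⟨by rw [add_sub_cancel_right]; linarith, by linarith⟩
  obtain ⟨s, -, hs⟩ := intermediate_value_Icc' (by linarith) hcont.continuousOn h0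
  exact ⟨s, (add_smul_mem_bisec_iff y s).mpr (sub_eq_zero.mp hs)⟩

theorem norm_add_smul_sub_le_of_mem_bisec {y : X} {s : ℝ} (h : y + s • (p - q) ∈ bisec p q) :
    ‖y + s • (p - q) - q‖ ≤ max ‖y - p‖ ‖y - q‖ := by
  set F : ℝ → ℝ := fun t => ‖y - q + t • (p - q)‖
  have hF : ConvexOn ℝ univ F := convexOn_norm_add_smul (y - q) (p - q)
  have h' : F (s - 1) = F s := (add_smul_mem_bisec_iff y s).mp h
  have hp : F (-1) = ‖y - p‖ := by
    simp only [F]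
    congr 1
    module
  have hq : F 0 = ‖y - q‖ := by simp [F]
  rw [add_sub_right_comm, ← hp, ← hq]
  by_cases h0 : (0 : ℝ) ∈ Ioo (s - 1) s
  · exact (hF.le_of_notMem_Ioo_of_eq (by linarith) h' fun h => h0.2.not_gt (by linarith [h.1]))
      |>.trans (le_max_left _ _)
  · exact (hF.le_of_notMem_Ioo_of_eq (by linarith) h' h0).trans (le_max_right _ _)

instance isClosed_span_singleton (d : X) : IsClosed ((ℝ ∙ d : Submodule ℝ X) : Set X) :=
  Submodule.closed_of_finiteDimensional _

variable (p q) in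
def bisecToQuotient : bisec p q → X ⧸ ℝ ∙ (p - q) := fun z => Submodule.Quotient.mk z.1

theorem continuous_bisecToQuotient : Continuous (bisecToQuotient p q) :=
  continuous_quot_mk.comp continuous_subtype_val

theorem exists_add_smul_of_mk_eq {y z : X}
    (h : (Submodule.Quotient.mk y : X ⧸ ℝ ∙ (p - q)) = Submodule.Quotient.mk z) :
    ∃ s : ℝ, z = y + s • (p - q) := by
  obtain ⟨s, hs⟩ := Submodule.mem_span_singleton.mp ((Submodule.Quotient.eq _).mp h.symm)
  exact ⟨s, by rw [hs, add_sub_cancel]⟩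

theorem strictPair.bijective_bisecToQuotient (hs : strictPair p q) (hpq : p ≠ q) :
    Function.Bijective (bisecToQuotient p q) := by
  refine ⟨fun ⟨y, hy⟩ ⟨z, hz⟩ h => ?_, fun x => ?_⟩
  · obtain ⟨s, rfl⟩ := exists_add_smul_of_mk_eq h
    exact Subtype.ext (by simp [hs.eq_zero_of_add_smul_mem_bisec hpq hy hz])
  · obtain ⟨y, rfl⟩ := Submodule.Quotient.mk_surjective _ x
    obtain ⟨s, hs⟩ := exists_add_smul_mem_bisec hpq y
    refine ⟨⟨y + s • (p - q), hs⟩, (Submodule.Quotient.eq _).mpr ?_⟩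
    simpa using Submodule.smul_mem _ s (Submodule.mem_span_singleton_self (p - q))

theorem norm_sub_le_norm_mk_add_of_mem_bisec {z : X} (hz : z ∈ bisec p q) :
    ‖z - q‖ ≤ ‖(Submodule.Quotient.mk z : X ⧸ ℝ ∙ (p - q))‖ + max ‖p‖ ‖q‖ := by
  refine le_of_forall_pos_lt_add fun ε hε => ?_
  obtain ⟨y, hy, hyε⟩ :=
    Submodule.Quotient.norm_mk_lt (Submodule.Quotient.mk z : X ⧸ ℝ ∙ (p - q)) hε
  obtain ⟨s, rfl⟩ := exists_add_smul_of_mk_eq hy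
  have hmax : max ‖y - p‖ ‖y - q‖ ≤ ‖y‖ + max ‖p‖ ‖q‖ :=
    max_le ((norm_sub_le _ _).trans (by gcongr; exact le_max_left _ _))
      ((norm_sub_le _ _).trans (by gcongr; exact le_max_right _ _))
  linarith [norm_add_smul_sub_le_of_mem_bisec hz]

theorem isClosedMap_bisecToQuotient [FiniteDimensional ℝ X] :
    IsClosedMap (bisecToQuotient p q) := by
  refine (isProperMap_iff_isCompact_preimage.mpr
    ⟨continuous_bisecToQuotient, fun K hK => ?_⟩).isClosedMap
  rw [Subtype.isCompact_iff]
  have himage : Subtype.val '' (bisecToQuotient p q ⁻¹' K)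
      = bisec p q ∩ Submodule.Quotient.mk ⁻¹' K := by
    ext z
    simp [bisecToQuotient, and_comm]
  obtain ⟨M, hM⟩ := hK.isBounded.subset_closedBall 0
  rw [himage]
  refine Metric.isCompact_of_isClosed_isBounded
    ((isClosed_eq (by fun_prop) (by fun_prop)).inter (hK.isClosed.preimage continuous_quot_mk))
    ((Metric.isBounded_closedBall (x := q) (r := M + max ‖p‖ ‖q‖)).subset fun z ⟨hz, hzK⟩ => ?_)
  have := norm_sub_le_norm_mk_add_of_mem_bisec hz
  have := mem_closedBall_zero_iff.mp (hM hzK)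
  rw [Metric.mem_closedBall, dist_eq_norm]
  linarith

noncomputable def strictPair.bisecHomeomorphQuotient [FiniteDimensional ℝ X]
    (hs : strictPair p q) (hpq : p ≠ q) :
    bisec p q ≃ₜ X ⧸ ℝ ∙ (p - q) :=
  IsHomeomorph.homeomorph _ <| isHomeomorph_iff_continuous_isClosedMap_bijective.mpr
    ⟨continuous_bisecToQuotient, isClosedMap_bisecToQuotient, hs.bijective_bisecToQuotient hpq⟩

theorem strict_bisector_homeomorphic_real
    (hdim : Module.finrank ℝ X = 2) (p q : X) (hpq : p ≠ q)
    (hs : strictPair p q) :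
    Nonempty (ℝ ≃ₜ (bisec p q : Set X)) := by
  have : FiniteDimensional ℝ X := Module.finite_of_finrank_eq_succ hdim
  have hrank : finrank ℝ ℝ = finrank ℝ (X ⧸ ℝ ∙ (p - q)) := by
    have := (ℝ ∙ (p - q)).finrank_quotient_add_finrank
    rw [finrank_span_singleton (sub_ne_zero.mpr hpq), hdim] at this
    rw [finrank_self]
    omega
  exact ⟨(ContinuousLinearEquiv.ofFinrankEq hrank).toHomeomorph.trans
    (hs.bisecHomeomorphQuotient hpq).symm⟩
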